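/- arXiv:2108.10490 — 2 statements merged into one kernel-verified Lean document; each statement's English description precedes it below -/
import Mathlib

section
/- Every context-free language over a unary alphabet (an alphabet with exactly one letter) is regular. -/
namespace UnaryCFL

open ContextFreeGrammar

variable {α : Type} {g : ContextFreeGrammar α}

inductive D (g : ContextFreeGrammar α) : List (Symbol α g.NT) → ℕ → ℕ → Prop
  | nil : D g [] 0 0
  | term {l n k} (x : α) : D g l n k → D g (Symbol.terminal x :: l) (n + 1) k
  | node {r : ContextFreeRule α g.NT} (hr : r ∈ g.rules) {l n₁ k₁ n₂ k₂} :
      D g r.output n₁ k₁ → D g l n₂ k₂ →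
      D g (Symbol.nonterminal r.input :: l) (n₁ + n₂) (k₁ + 1 + k₂)

lemma D.cast {l n k n' k'} (h : D g l n k) (hn : n = n') (hk : k = k') : D g l n' k' :=
  hn ▸ hk ▸ h

lemma D.append {u v : List (Symbol α g.NT)} {n₁ k₁ n₂ k₂}
    (h₁ : D g u n₁ k₁) (h₂ : D g v n₂ k₂) : D g (u ++ v) (n₁ + n₂) (k₁ + k₂) := by
  induction h₁ with
  | nil => exact h₂.cast (by omega) (by omega)
  | term x h ih => exact (ih.term x).cast (by omega) (by omega)
  | node hr h hl ih₁ ih₂ => exact (D.node hr h ih₂).cast (by omega) (by omega)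

lemma D.split {u v : List (Symbol α g.NT)} {n k} (h : D g (u ++ v) n k) :
    ∃ n₁ k₁ n₂ k₂, D g u n₁ k₁ ∧ D g v n₂ k₂ ∧ n = n₁ + n₂ ∧ k = k₁ + k₂ := by
  induction u generalizing n k with
  | nil => exact ⟨0, 0, n, k, D.nil, h, by omega, by omega⟩
  | cons s u ih =>
    cases h with
    | term x h =>
      obtain ⟨n₁, k₁, n₂, k₂, h₁, h₂, rfl, rfl⟩ := ih h
      exact ⟨n₁ + 1, k₁, n₂, k₂, h₁.term x, h₂, by omega, by omega⟩
    | node hr h₁ h₂ =>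
      obtain ⟨n₁', k₁', n₂', k₂', hh₁, hh₂, rfl, rfl⟩ := ih h₂
      exact ⟨_ + n₁', _ + k₁', n₂', k₂', D.node hr h₁ hh₁, hh₂, by omega, by omega⟩

lemma D.replicate (n : ℕ) (x : α) : D g (List.replicate n (Symbol.terminal x)) n 0 := by
  induction n with
  | zero => exact D.nil
  | succ n ih => exact (ih.term x)

lemma D.wrap {r : ContextFreeRule α g.NT} (hr : r ∈ g.rules) {n k} (h : D g r.output n k) :
    D g [Symbol.nonterminal r.input] n (k + 1) :=
  (D.node hr h D.nil).cast (by omega) (by omega)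

lemma D.single_inv {A n k} (h : D g [Symbol.nonterminal A] n k) :
    ∃ r ∈ g.rules, r.input = A ∧ ∃ k', D g r.output n k' ∧ k = k' + 1 := by
  cases h with
  | node hr h₁ h₂ =>
    cases h₂
    exact ⟨_, hr, rfl, _, h₁.cast (by omega) rfl, by omega⟩

/-- One-hole contexts from nonterminal `A` to hole `C`, with side yields `d₁` (left),
`d₂` (right) and `j` rule applications. -/
inductive Ctx (g : ContextFreeGrammar α) : g.NT → g.NT → ℕ → ℕ → ℕ → Prop
  | refl (A) : Ctx g A A 0 0 0
  | step {r : ContextFreeRule α g.NT} (hr : r ∈ g.rules) {u v : List (Symbol α g.NT)}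
      {B C p kp q kq d₁ d₂ j} (hout : r.output = u ++ Symbol.nonterminal B :: v)
      (hu : D g u p kp) (hv : D g v q kq) (hc : Ctx g B C d₁ d₂ j) :
      Ctx g r.input C (p + d₁) (d₂ + q) (1 + kp + kq + j)

lemma Ctx.cast {A C d₁ d₂ j d₁' d₂' j'} (h : Ctx g A C d₁ d₂ j)
    (h₁ : d₁ = d₁') (h₂ : d₂ = d₂') (h₃ : j = j') : Ctx g A C d₁' d₂' j' :=
  h₁ ▸ h₂ ▸ h₃ ▸ h

lemma Ctx.fill {A C e₁ e₂ j m k} (hc : Ctx g A C e₁ e₂ j)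
    (h : D g [Symbol.nonterminal C] m k) :
    D g [Symbol.nonterminal A] (e₁ + m + e₂) (j + k) := by
  induction hc with
  | refl A => exact h.cast (by omega) (by omega)
  | @step r hr u v B C p kp q kq d₁ d₂ j' hout hu hv hc ih =>
    have hmid : D g (Symbol.nonterminal B :: v) (d₁ + m + d₂ + q) (j' + k + kq) :=
      (ih h).append hv
    have : D g r.output (p + (d₁ + m + d₂ + q)) (kp + (j' + k + kq)) := by
      rw [hout]; exact hu.append hmid
    exact (this.wrap hr).cast (by omega) (by omega)

lemma Ctx.trans {A B C e₁ e₂ j d₁ d₂ j'} (h₁ : Ctx g A B e₁ e₂ j) (h₂ : Ctx g B C d₁ d₂ j') :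
    Ctx g A C (e₁ + d₁) (d₂ + e₂) (j + j') := by
  induction h₁ with
  | refl A => exact h₂.cast (by omega) (by omega) (by omega)
  | step hr hout hu hv hc ih => exact (Ctx.step hr hout hu hv (ih h₂)).cast (by omega) (by omega) (by omega)

lemma Ctx.iterate {A d₁ d₂ j} (h : Ctx g A A d₁ d₂ j) :
    ∀ t, Ctx g A A (t * d₁) (t * d₂) (t * j)
  | 0 => (Ctx.refl A).cast (by ring) (by ring) (by ring)
  | t + 1 => (h.trans (h.iterate t)).cast (by ring) (by ring) (by ring)

lemma ctx_step {r : ContextFreeRule α g.NT} (hr : r ∈ g.rules)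
    {u v : List (Symbol α g.NT)} {B p kp q kq}
    (hout : r.output = u ++ Symbol.nonterminal B :: v)
    (hu : D g u p kp) (hv : D g v q kq) :
    Ctx g r.input B p q (1 + kp + kq) :=
  (Ctx.step hr hout hu hv (Ctx.refl B)).cast (by omega) (by omega) (by omega)

/- Bridges between `D` and `Derives`. -/

variable [Unique α]

lemma D.derives {l n k} (h : D g l n k) :
    g.Derives l (List.replicate n (Symbol.terminal (default : α))) := by
  induction h with
  | nil => exact Relation.ReflTransGen.refl
  | term x h ih =>
    have hx : x = (default : α) := Subsingleton.elim _ _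
    rw [List.replicate_succ, hx]
    exact ih.append_left [Symbol.terminal (default : α)]
  | @node r hr l n₁ k₁ n₂ k₂ h₁ h₂ ih₁ ih₂ =>
    have hstep : g.Produces (Symbol.nonterminal r.input :: l) (r.output ++ l) :=
      ⟨r, hr, ContextFreeRule.Rewrites.head l⟩
    have h₂' := ih₂.append_left (List.replicate n₁ (Symbol.terminal (default : α)))
    have h₁' := ih₁.append_right l
    rw [List.replicate_add]
    exact hstep.trans_derives (h₁'.trans h₂')

lemma derives_to_D {l : List (Symbol α g.NT)} {u : List α}
    (h : g.Derives l (u.map Symbol.terminal)) : ∃ k, D g l u.length k := by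
  induction h using Relation.ReflTransGen.head_induction_on with
  | refl =>
    refine ⟨0, ?_⟩
    induction u with
    | nil => exact D.nil
    | cons x u ih => exact ih.term x
  | head hp _ ih =>
    obtain ⟨k, hk⟩ := ih
    obtain ⟨r, hr, hrw⟩ := hp
    obtain ⟨p, q, hl, hl'⟩ := hrw.exists_parts
    rw [hl'] at hk
    rw [List.append_assoc] at hk
    obtain ⟨n₁, k₁, n₂, k₂, hp₁, hp₂, hn, hkk⟩ := hk.split
    obtain ⟨n₃, k₃, n₄, k₄, hq₁, hq₂, hn2, hkk2⟩ := hp₂.split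
    refine ⟨k₁ + (k₃ + 1) + k₄, ?_⟩
    rw [hl, List.append_assoc]
    exact (hp₁.append ((hq₁.wrap hr).append hq₂)).cast (by omega) (by omega)

lemma mem_language_iff_D {n : ℕ} :
    List.replicate n (default : α) ∈ g.language ↔ ∃ k, D g [Symbol.nonterminal g.initial] n k := by
  rw [ContextFreeGrammar.mem_language_iff]
  constructor
  · intro h
    have := derives_to_D h
    simpa using this
  · rintro ⟨k, hk⟩
    have := hk.derives
    rwa [List.map_replicate]

/- Grammar-level constants. -/

def Bb (g : ContextFreeGrammar α) : ℕ := 1 + ∑ r ∈ g.rules, r.output.length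

omit [Unique α] in
lemma output_le_Bb {r : ContextFreeRule α g.NT} (hr : r ∈ g.rules) :
    r.output.length ≤ Bb g :=
  le_trans (Finset.single_le_sum (f := fun r : ContextFreeRule α g.NT => r.output.length)
    (fun _ _ => Nat.zero_le _) hr) (by simp [Bb])

omit [Unique α] in
lemma one_le_Bb : 1 ≤ Bb g := by simp [Bb]

noncomputable def nsF (g : ContextFreeGrammar α) : Finset g.NT :=
  @Finset.image _ _ (Classical.decEq _) (fun r => r.input) g.rules

omit [Unique α] in
lemma mem_nsF {A n k} (h : D g [Symbol.nonterminal A] n k) : A ∈ nsF g := by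
  obtain ⟨r, hr, hin, -⟩ := h.single_inv
  unfold nsF
  rw [@Finset.mem_image _ _ (Classical.decEq _)]
  exact ⟨r, hr, hin⟩

noncomputable def Mcard (g : ContextFreeGrammar α) : ℕ := (nsF g).card

/- Max-yield child extraction. -/
omit [Unique α] in
lemma D.child {l : List (Symbol α g.NT)} {n k} (h : D g l n k) :
    n ≤ l.length ∨ ∃ u B v p kp n₁ k₁ q kq, l = u ++ Symbol.nonterminal B :: v ∧
      D g u p kp ∧ D g [Symbol.nonterminal B] n₁ k₁ ∧ D g v q kq ∧
      n = p + n₁ + q ∧ k = kp + k₁ + kq ∧ n ≤ l.length * max 1 n₁ := by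
  induction h with
  | nil => left; simp
  | term x h ih =>
    rcases ih with hle | ⟨u, B, v, p, kp, n₁, k₁, q, kq, rfl, hu, hB, hv, hn, hk, hb⟩
    · left; simpa using Nat.succ_le_succ hle
    · right
      have h1 : 1 ≤ max 1 n₁ := le_max_left _ _
      refine ⟨Symbol.terminal x :: u, B, v, p+1, kp, n₁, k₁, q, kq, rfl, hu.term x, hB, hv,
        by omega, by omega, ?_⟩
      have e1 : ((u ++ Symbol.nonterminal B :: v).length + 1) * max 1 n₁
          = (u ++ Symbol.nonterminal B :: v).length * max 1 n₁ + max 1 n₁ := by ring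
      simp only [List.length_cons]
      omega
  | @node r hr l n₁ k₁ n₂ k₂ h₁ h₂ ih₁ ih₂ =>
    have hA : D g [Symbol.nonterminal r.input] n₁ (k₁ + 1) := h₁.wrap hr
    right
    rcases ih₂ with hle | ⟨u, B, v, p, kp, n₁', k₁', q, kq, hl, hu, hB, hv, hn, hk, hb⟩
    · refine ⟨[], r.input, l, 0, 0, n₁, k₁+1, n₂, k₂, rfl, D.nil, hA, h₂, by omega, by omega, ?_⟩
      have h1 : 1 ≤ max 1 n₁ := le_max_left _ _
      have e1 : (l.length + 1) * max 1 n₁ = l.length * max 1 n₁ + max 1 n₁ := by ring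
      have e2 : l.length ≤ l.length * max 1 n₁ := Nat.le_mul_of_pos_right _ (by omega)
      have e3 : n₁ ≤ max 1 n₁ := le_max_right _ _
      simp only [List.length_cons]
      omega
    · subst hl
      by_cases hcmp : n₁ ≤ n₁'
      · refine ⟨Symbol.nonterminal r.input :: u, B, v, n₁ + p, (k₁+1) + kp, n₁', k₁', q, kq,
          rfl, hA.append hu, hB, hv, by omega, by omega, ?_⟩
        have h1 : 1 ≤ max 1 n₁' := le_max_left _ _
        have e1 : ((u ++ Symbol.nonterminal B :: v).length + 1) * max 1 n₁'
            = (u ++ Symbol.nonterminal B :: v).length * max 1 n₁' + max 1 n₁' := by ring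
        have e3 : n₁' ≤ max 1 n₁' := le_max_right _ _
        simp only [List.length_cons]
        omega
      · refine ⟨[], r.input, u ++ Symbol.nonterminal B :: v, 0, 0, n₁, k₁+1, n₂, k₂, rfl,
          D.nil, hA, h₂, by omega, by omega, ?_⟩
        have h1 : 1 ≤ max 1 n₁ := le_max_left _ _
        have e1 : ((u ++ Symbol.nonterminal B :: v).length + 1) * max 1 n₁
            = (u ++ Symbol.nonterminal B :: v).length * max 1 n₁ + max 1 n₁ := by ring
        have e2 : (u ++ Symbol.nonterminal B :: v).length * max 1 n₁'
            ≤ (u ++ Symbol.nonterminal B :: v).length * max 1 n₁ :=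
          Nat.mul_le_mul_left _ (max_le_max le_rfl (by omega))
        have e3 : n₁ ≤ max 1 n₁ := le_max_right _ _
        simp only [List.length_cons]
        omega

omit [Unique α] in
/-- Descend to a subtree with medium-sized yield. -/
lemma desc : ∀ k {A : g.NT} {n}, D g [Symbol.nonterminal A] n k →
    Bb g ^ (Mcard g + 2) < n →
    ∃ C e₁ e₂ j₀ n₀ k₀, Ctx g A C e₁ e₂ j₀ ∧ D g [Symbol.nonterminal C] n₀ k₀ ∧
      Bb g ^ (Mcard g + 1) < n₀ ∧ n₀ ≤ Bb g ^ (Mcard g + 2) ∧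
      n = e₁ + n₀ + e₂ ∧ j₀ + k₀ ≤ k := by
  intro k
  induction k using Nat.strong_induction_on with
  | _ k ih =>
    intro A n h hn
    obtain ⟨r, hr, hin, k', hout, hkk⟩ := h.single_inv
    subst hin
    have hBb := output_le_Bb hr
    have h1B : 1 ≤ Bb g := one_le_Bb
    rcases hout.child with hle | ⟨u, B, v, p, kp, n₁, k₁, q, kq, houteq, hu, hB, hv, hval, hsz, hbnd⟩
    · exfalso
      have : Bb g ≤ Bb g ^ (Mcard g + 2) := Nat.le_self_pow (by omega) _
      omega
    · have hbnd2 : n ≤ Bb g * max 1 n₁ :=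
        le_trans hbnd (Nat.mul_le_mul_right _ hBb)
      have hpow : Bb g ^ (Mcard g + 2) = Bb g * Bb g ^ (Mcard g + 1) := by ring
      have hmax : Bb g ^ (Mcard g + 1) < max 1 n₁ := by
        have h2 : Bb g * Bb g ^ (Mcard g + 1) < Bb g * max 1 n₁ := by
          rw [← hpow]; omega
        exact Nat.lt_of_mul_lt_mul_left h2
      have h1n : 1 ≤ Bb g ^ (Mcard g + 1) := Nat.one_le_pow _ _ (by omega)
      have hn₁ : Bb g ^ (Mcard g + 1) < n₁ := by
        rcases max_cases 1 n₁ with ⟨he, _⟩ | ⟨he, _⟩ <;> omega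
      by_cases hstop : n₁ ≤ Bb g ^ (Mcard g + 2)
      · exact ⟨B, p, q, 1 + kp + kq, n₁, k₁, ctx_step hr houteq hu hv, hB, hn₁, hstop,
          by omega, by omega⟩
      · obtain ⟨C, e₁, e₂, j₀, n₀, k₀, hctx, hC, hl, hup, hveq, hszle⟩ :=
          ih k₁ (by omega) hB (by omega)
        exact ⟨C, p + e₁, e₂ + q, (1 + kp + kq) + j₀, n₀, k₀,
          (ctx_step hr houteq hu hv).trans hctx, hC, hl, hup, by omega, by omega⟩

omit [Unique α] in
/-- Find a repeated nonterminal (a pumpable loop) in a large derivation. -/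
lemma rep' : ∀ k {A : g.NT} {n} (V : Finset g.NT), D g [Symbol.nonterminal A] n k →
    A ∉ V → V ⊆ nsF g → Bb g ^ (Mcard g + 1 - V.card) < n →
    (∃ X f₁ f₂ j₀ d₁ d₂ j n' k', Ctx g A X f₁ f₂ j₀ ∧ Ctx g X X d₁ d₂ j ∧ 1 ≤ j ∧
       D g [Symbol.nonterminal X] n' k' ∧ n = f₁ + d₁ + n' + d₂ + f₂ ∧ j₀ + j + k' ≤ k)
    ∨ (∃ C ∈ V, ∃ d₁ d₂ j n' k', Ctx g A C d₁ d₂ j ∧ D g [Symbol.nonterminal C] n' k' ∧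
       n = d₁ + n' + d₂ ∧ j + k' ≤ k) := by
  intro k
  induction k using Nat.strong_induction_on with
  | _ k ih =>
    intro A n V h hAV hVsub hn
    haveI := Classical.decEq g.NT
    have hAns : A ∈ nsF g := mem_nsF h
    have hVcard : V.card ≤ Mcard g := Finset.card_le_card hVsub
    obtain ⟨r, hr, hin, k', hout, hkk⟩ := h.single_inv
    subst hin
    have hBb := output_le_Bb hr
    have h1B : 1 ≤ Bb g := one_le_Bb
    have hexp1 : 1 ≤ Mcard g + 1 - V.card := by omega
    rcases hout.child with hle | ⟨u, B, v, p, kp, n₁, k₁, q, kq, houteq, hu, hB, hv, hval, hsz, hbnd⟩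
    · exfalso
      have : Bb g ≤ Bb g ^ (Mcard g + 1 - V.card) := Nat.le_self_pow (by omega) _
      omega
    · have hBns : B ∈ nsF g := mem_nsF hB
      have hbnd2 : n ≤ Bb g * max 1 n₁ := le_trans hbnd (Nat.mul_le_mul_right _ hBb)
      have hpow : Bb g ^ (Mcard g + 1 - V.card)
          = Bb g * Bb g ^ (Mcard g - V.card) := by
        rw [← pow_succ']
        congr 1
        omega
      have hmax : Bb g ^ (Mcard g - V.card) < max 1 n₁ := by
        have h2 : Bb g * Bb g ^ (Mcard g - V.card) < Bb g * max 1 n₁ := by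
          rw [← hpow]; omega
        exact Nat.lt_of_mul_lt_mul_left h2
      have h1n : 1 ≤ Bb g ^ (Mcard g - V.card) := Nat.one_le_pow _ _ (by omega)
      have hn₁ : Bb g ^ (Mcard g - V.card) < n₁ := by
        rcases max_cases 1 n₁ with ⟨he, _⟩ | ⟨he, _⟩ <;> omega
      have hstep := ctx_step hr houteq hu hv
      by_cases hBA : B = r.input
      · subst hBA
        exact Or.inl ⟨r.input, 0, 0, 0, p, q, 1 + kp + kq, n₁, k₁, Ctx.refl r.input, hstep, by omega,
          hB, by omega, by omega⟩
      · by_cases hBV : B ∈ V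
        · exact Or.inr ⟨B, hBV, p, q, 1 + kp + kq, n₁, k₁, hstep, hB, by omega, by omega⟩
        · have hcardins : (insert r.input V).card = V.card + 1 :=
            Finset.card_insert_of_notMem hAV
          have hBnotins : B ∉ insert r.input V := by
            simp only [Finset.mem_insert]
            tauto
          have hsubins : insert r.input V ⊆ nsF g := by
            intro x hx
            rcases Finset.mem_insert.mp hx with rfl | hx
            · exact hAns
            · exact hVsub hx
          have hexp : Bb g ^ (Mcard g + 1 - (insert r.input V).card) < n₁ := by
            rw [hcardins]
            have : Mcard g + 1 - (V.card + 1) = Mcard g - V.card := by omega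
            rw [this]
            exact hn₁
          rcases ih k₁ (by omega) (insert r.input V) hB hBnotins hsubins hexp with
            ⟨X, f₁, f₂, j₀, d₁, d₂, j, n', k'', htop, hloop, hj, hD, heq, hsle⟩ |
            ⟨C, hCV, d₁, d₂, j, n', k'', hc, hD, heq, hsle⟩
          · exact Or.inl ⟨X, p + f₁, f₂ + q, (1 + kp + kq) + j₀, d₁, d₂, j, n', k'',
              hstep.trans htop, hloop, hj, hD, by omega, by omega⟩
          · have hfull := hstep.trans hc
            rcases Finset.mem_insert.mp hCV with rfl | hCV'
            · exact Or.inl ⟨r.input, 0, 0, 0, p + d₁, d₂ + q, (1 + kp + kq) + j, n', k'',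
                Ctx.refl r.input, hfull, by omega, hD, by omega, by omega⟩
            · exact Or.inr ⟨C, hCV', p + d₁, d₂ + q, (1 + kp + kq) + j, n', k'',
                hfull, hD, by omega, by omega⟩

omit [Unique α] in
/-- The unary pumping lemma at the level of `D`. -/
lemma pump {n : ℕ} (hn : Bb g ^ (Mcard g + 2) < n)
    (h : ∃ k, D g [Symbol.nonterminal g.initial] n k) :
    ∃ d, 1 ≤ d ∧ d ≤ Bb g ^ (Mcard g + 2) ∧
      ∀ s, ∃ k, D g [Symbol.nonterminal g.initial] (n + s * d) k := by
  classical
  set k := Nat.find h with hkdef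
  have hk : D g [Symbol.nonterminal g.initial] n k := Nat.find_spec h
  obtain ⟨C, e₁, e₂, j₀, n₀, k₀, hctx, hC, hlow, hupp, hval, hsz⟩ := desc k hk hn
  have hlow' : Bb g ^ (Mcard g + 1 - (∅ : Finset g.NT).card) < n₀ := by
    simpa using hlow
  rcases rep' k₀ (∅ : Finset g.NT) hC (Finset.notMem_empty _) (Finset.empty_subset _) hlow' with
    ⟨X, f₁, f₂, j₀', d₁, d₂, j, n', k', htop, hloop, hj, hD, heq, hsz'⟩ |
    ⟨Cbad, hCbad, -⟩
  · by_cases hd0 : d₁ + d₂ = 0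
    · exfalso
      have hfill : D g [Symbol.nonterminal g.initial] (e₁ + (f₁ + n' + f₂) + e₂)
          (j₀ + (j₀' + k')) := hctx.fill (htop.fill hD)
      have hlt : j₀ + (j₀' + k') < k := by omega
      have hval' : e₁ + (f₁ + n' + f₂) + e₂ = n := by omega
      exact Nat.find_min h hlt (hval' ▸ hfill)
    · refine ⟨d₁ + d₂, by omega, by omega, fun s => ?_⟩
      have hloops := hloop.iterate (s + 1)
      have hfill : D g [Symbol.nonterminal g.initial]
          (e₁ + (f₁ + ((s+1) * d₁ + n' + (s+1) * d₂) + f₂) + e₂)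
          (j₀ + (j₀' + ((s+1) * j + k'))) :=
        hctx.fill (htop.fill (hloops.fill hD))
      refine ⟨_, hfill.cast ?_ rfl⟩
      have : n = e₁ + (f₁ + d₁ + n' + d₂ + f₂) + e₂ := by omega
      rw [this]; ring
  · exact absurd hCbad (Finset.notMem_empty _)

/-- One-sided eventual closure under `+ p` upgrades to two-sided eventual periodicity. -/
lemma event_periodic (S : ℕ → Prop) (p N : ℕ) (hp : 0 < p)
    (h : ∀ n, N ≤ n → S n → S (n + p)) :
    ∃ t, ∀ n, t ≤ n → (S n ↔ S (n + p)) := by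
  classical
  set f : ℕ → ℕ := fun r => sInf {m | S m ∧ N ≤ m ∧ m % p = r} with hf
  refine ⟨N + (Finset.range p).sup f, fun n hn => ?_⟩
  constructor
  · exact fun hS => h n (by omega) hS
  · intro hS
    have hmemT : (n + p) ∈ {m | S m ∧ N ≤ m ∧ m % p = n % p} :=
      ⟨hS, by omega, Nat.add_mod_right n p⟩
    have hTne : {m | S m ∧ N ≤ m ∧ m % p = n % p}.Nonempty := ⟨_, hmemT⟩
    have hm := Nat.sInf_mem hTne
    set m := sInf {m | S m ∧ N ≤ m ∧ m % p = n % p} with hmdef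
    obtain ⟨hmS, hmN, hmmod⟩ := hm
    have hmle : m ≤ n := by
      have h1 : f (n % p) ≤ (Finset.range p).sup f :=
        Finset.le_sup (Finset.mem_range.mpr (Nat.mod_lt n hp))
      have h2 : f (n % p) = m := rfl
      omega
    have hclimb : ∀ i, S (m + i * p) := by
      intro i
      induction i with
      | zero => simpa using hmS
      | succ i ih =>
        have := h (m + i * p) (by omega) ih
        have he : m + i * p + p = m + (i + 1) * p := by ring
        rwa [he] at this
    have hdvd : p ∣ n - m := by
      exact Nat.dvd_of_mod_eq_zero (Nat.sub_mod_eq_zero_of_mod_eq hmmod.symm)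
    have := hclimb ((n - m) / p)
    have he : m + (n - m) / p * p = n := by
      have := Nat.div_mul_cancel hdvd
      omega
    rwa [he] at this

/-- A unary language that is eventually periodic is regular. -/
lemma regular_of_periodic (L : Language α) (p t : ℕ) (hp : 0 < p)
    (h : ∀ n, t ≤ n → ((List.replicate n (default : α)) ∈ L ↔
      List.replicate (n + p) (default : α) ∈ L)) :
    L.IsRegular := by
  classical
  set F : ℕ → ℕ := fun s => if s + 1 < t + p then s + 1 else t with hF
  set φ : ℕ → ℕ := fun n => F^[n] 0 with hφ
  have hφ0 : φ 0 = 0 := rfl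
  have hφs : ∀ n, φ (n + 1) = F (φ n) := fun n => Function.iterate_succ_apply' F n 0
  have hφlt : ∀ n, φ n < t + p := by
    intro n
    induction n with
    | zero => have := hφ0; omega
    | succ n ih =>
      rw [hφs]
      simp only [hF]
      split <;> omega
  have hφid : ∀ n, n < t + p → φ n = n := by
    intro n
    induction n with
    | zero => intro _; exact hφ0
    | succ n ih =>
      intro hlt
      rw [hφs, ih (by omega)]
      simp only [hF]
      split <;> omega
  have hφper : ∀ m, t ≤ m → φ (m + p) = φ m := by
    intro m hm
    induction m, hm using Nat.le_induction with
    | base =>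
      have h1 : t + p = (t + p - 1) + 1 := by omega
      rw [h1, hφs, hφid _ (by omega)]
      simp only [hF]
      rw [hφid t (by omega)]
      split <;> omega
    | succ m hm ih =>
      have h1 : m + 1 + p = (m + p) + 1 := by omega
      rw [h1, hφs, ih, ← hφs]
  have hφL : ∀ n, (List.replicate (φ n) (default : α) ∈ L ↔
      List.replicate n (default : α) ∈ L) := by
    intro n
    induction n using Nat.strong_induction_on with
    | _ n ih =>
      by_cases hlt : n < t + p
      · rw [hφid n hlt]
      · have hplen : n - p + p = n := by omega
        have htle : t ≤ n - p := by omega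
        have h2 := hφper (n - p) htle
        rw [hplen] at h2
        have h3 := h (n - p) htle
        rw [hplen] at h3
        rw [h2, ih (n - p) (by omega)]
        exact h3
  refine ⟨Fin (t + p), inferInstance, ?_, ?_⟩
  · exact {
      step := fun s _ => ⟨F s.val, by
        simp only [hF]
        split <;> omega⟩
      start := ⟨0, by omega⟩
      accept := {s | List.replicate s.val (default : α) ∈ L} }
  · ext w
    have hw : w = List.replicate w.length (default : α) :=
      List.eq_replicate_length.mpr (fun b _ => Subsingleton.elim _ _)
    rw [DFA.mem_accepts]
    have heval : ∀ n, (DFA.eval {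
        step := fun (s : Fin (t+p)) (_ : α) => ⟨F s.val, by
          simp only [hF]
          split <;> omega⟩
        start := ⟨0, by omega⟩
        accept := {s | List.replicate s.val (default : α) ∈ L} }
        (List.replicate n (default : α))).val = φ n := by
      intro n
      induction n with
      | zero => rfl
      | succ n ih =>
        rw [List.replicate_succ', DFA.eval_append_singleton, hφs]
        simp only [ih]
    constructor
    · intro hacc
      have := hacc
      rw [show w = List.replicate w.length (default : α) from hw] at this ⊢
      simp only [Set.mem_setOf_eq] at this
      rw [heval w.length] at this
      exact (hφL w.length).mp this
    · intro hL
      rw [show w = List.replicate w.length (default : α) from hw]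
      simp only [Set.mem_setOf_eq]
      rw [heval w.length]
      exact (hφL w.length).mpr (hw ▸ hL)

end UnaryCFL

/-- Every context-free language over a unary alphabet is regular. -/
theorem unary_contextFree_isRegular {α : Type} [Unique α] (L : Language α)
    (h : L.IsContextFree) : L.IsRegular := by
  classical
  obtain ⟨g, rfl⟩ := h
  set P := UnaryCFL.Bb g ^ (UnaryCFL.Mcard g + 2) with hP
  have hper1 : ∀ n, P + 1 ≤ n → List.replicate n (default : α) ∈ g.language →
      List.replicate (n + Nat.factorial P) (default : α) ∈ g.language := by
    intro n hn hmem
    have hD : ∃ k, UnaryCFL.D g [Symbol.nonterminal g.initial] n k :=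
      UnaryCFL.mem_language_iff_D.mp hmem
    obtain ⟨d, hd1, hdP, hall⟩ := UnaryCFL.pump (by omega) hD
    have hdvd : d ∣ Nat.factorial P := Nat.dvd_factorial hd1 hdP
    obtain ⟨k, hk⟩ := hall (Nat.factorial P / d)
    have he : n + Nat.factorial P / d * d = n + Nat.factorial P := by
      rw [Nat.div_mul_cancel hdvd]
    rw [he] at hk
    exact UnaryCFL.mem_language_iff_D.mpr ⟨k, hk⟩
  obtain ⟨t, ht⟩ := UnaryCFL.event_periodic
    (fun n => List.replicate n (default : α) ∈ g.language)
    (Nat.factorial P) (P + 1) (Nat.factorial_pos P) hper1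
  exact UnaryCFL.regular_of_periodic g.language (Nat.factorial P) t (Nat.factorial_pos P) ht
end

section
/- There is no PDL(CFL) formula expressing the property ⟨aⁿ⟩[bⁿ]p: for every finite collection C of context-free languages and every PDL(C) formula φ, there exist two finite LTSs T₁, T₂ over {a,b} such that T₁ satisfies the property '∃n ≥ 1: some a-path of length n leads to a state from which all b-paths of length n end in a p-state', T₂ does not, yet neither initial state is distinguished by φ. -/
/-!
Every state of the structures below carries an `a`-loop, so a path sees only the number of
letters `b` of its word, and a modality `⟨L⟩` only the set `{|w|_b : w ∈ L}`. For context-free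
`L` this set is eventually periodic: a long word has a parse tree with a loop `B ⇒* x B y`
where `xy` contains `b`, and iterating one fixed loop per nonterminal adds a common period `p`.

`T₁` has a root whose `b`-edge enters a `b`-chain `n₀` steps above its `p`-state, `T₂` also
enters `n₀ + p` steps above it, so `⟨aⁿ⟩[bⁿ]p` holds in `T₁` for `n = n₀` and fails in `T₂`.
Up to depth `d`, chain states congruent mod `p` and high enough above the `p`-state are
indistinguishable: a path from one of them reading a word with many `b`s is matched, by
periodicity, by a word of the same language landing at the same state or again high and
congruent, and `n₀` is large enough to keep this going for `md φ` modalities.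
-/

/-- A labelled transition system with edge labels in `α` and atomic propositions `P`. -/
structure LTS (α P : Type) where
  S : Type
  trans : S → α → S → Prop
  label : S → P → Prop

/-- A path in an LTS labelled by a word. -/
inductive LTS.Path {α P : Type} (T : LTS α P) : T.S → List α → T.S → Prop
  | refl (s : T.S) : LTS.Path T s [] s
  | step {s : T.S} {a : α} {s' : T.S} {w : List α} {t : T.S} :
      T.trans s a s' → LTS.Path T s' w t → LTS.Path T s (a :: w) t

/-- Formulas of propositional dynamic logic over an arbitrary class of
`α`-languages (each modality carries a language). -/
inductive PDLFormula (α P : Type) : Type 1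
  | atom : P → PDLFormula α P
  | neg : PDLFormula α P → PDLFormula α P
  | or : PDLFormula α P → PDLFormula α P → PDLFormula α P
  | and : PDLFormula α P → PDLFormula α P → PDLFormula α P
  | dia : Language α → PDLFormula α P → PDLFormula α P
  | box : Language α → PDLFormula α P → PDLFormula α P

/-- Semantics of PDL formulas over an LTS. -/
def Sat {α P : Type} (T : LTS α P) : T.S → PDLFormula α P → Prop
  | s, .atom p => T.label s p
  | s, .neg φ => ¬ Sat T s φ
  | s, .or φ ψ => Sat T s φ ∨ Sat T s ψ
  | s, .and φ ψ => Sat T s φ ∧ Sat T s ψ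
  | s, .dia L φ => ∃ (w : List α) (t : T.S), w ∈ L ∧ T.Path s w t ∧ Sat T t φ
  | s, .box L φ => ∀ (w : List α) (t : T.S), w ∈ L → T.Path s w t → Sat T t φ

/-- Modal depth of a PDL formula. -/
def md {α P : Type} : PDLFormula α P → ℕ
  | .atom _ => 0
  | .neg φ => md φ + 1
  | .or φ ψ => max (md φ) (md ψ)
  | .and φ ψ => max (md φ) (md ψ)
  | .dia _ φ => md φ + 1
  | .box _ φ => md φ + 1

/-- The formula only uses languages from the class `C`, i.e. it is a `PDL(C)` formula. -/
def UsesLangs {α P : Type} (C : Set (Language α)) : PDLFormula α P → Prop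
  | .atom _ => True
  | .neg φ => UsesLangs C φ
  | .or φ ψ => UsesLangs C φ ∧ UsesLangs C ψ
  | .and φ ψ => UsesLangs C φ ∧ UsesLangs C ψ
  | .dia L φ => L ∈ C ∧ UsesLangs C φ
  | .box L φ => L ∈ C ∧ UsesLangs C φ

/-- A two-letter alphabet `{a, b}`. -/
inductive AB : Type
  | a | b
  deriving DecidableEq

/-- The property `⟨aⁿ⟩[bⁿ]p` at a state `s₀`: there is `n ≥ 1` and an `a`-labelled
path of length `n` from `s₀` to some state `s` such that every `b`-labelled path of
length `n` from `s` ends in a state satisfying `p`. -/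
def DiaBoxProp (T : LTS AB Unit) (s₀ : T.S) : Prop :=
  ∃ n : ℕ, 1 ≤ n ∧ ∃ s : T.S, T.Path s₀ (List.replicate n AB.a) s ∧
    ∀ t : T.S, T.Path s (List.replicate n AB.b) t → T.label t ()


/-! ### Eventually periodic sets of naturals -/

def PeriodicAbove (S : Set ℕ) (M p : ℕ) : Prop :=
  ∀ a b, M ≤ a → M ≤ b → a ≡ b [MOD p] → (a ∈ S ↔ b ∈ S)

theorem PeriodicAbove.mono {S : Set ℕ} {M M' p p' : ℕ} (h : PeriodicAbove S M p)
    (hM : M ≤ M') (hp : p ∣ p') : PeriodicAbove S M' p' :=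
  fun a b ha hb hab => h a b (hM.trans ha) (hM.trans hb) (hab.of_dvd hp)

section AddMem

variable {S : Set ℕ} {K p : ℕ}

theorem add_mul_mem_of_add_mem (h : ∀ n ∈ S, K < n → n + p ∈ S) {n : ℕ} (hn : n ∈ S)
    (hK : K < n) (j : ℕ) : n + p * j ∈ S := by
  induction j with
  | zero => simpa using hn
  | succ j ih => simpa [Nat.mul_succ, Nat.add_assoc] using h _ ih (by omega)

theorem exists_forall_add_mem_imp_mem (h : ∀ n ∈ S, K < n → n + p ∈ S) (hp : 0 < p) :
    ∃ M, ∀ n, M ≤ n → n + p ∈ S → n ∈ S := by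
  -- at most one jump into `S` per residue class, hence finitely many
  set J := {n | K < n ∧ n ∉ S ∧ n + p ∈ S}
  have hinj : J.InjOn (· % p) := by
    intro a ha b hb hab
    wlog hle : a ≤ b generalizing a b
    · exact (this hb ha hab.symm (by omega)).symm
    obtain ⟨_ | j, hj⟩ := (Nat.modEq_iff_dvd' hle).1 hab
    · omega
    have hKa : K < a := ha.1
    refine absurd ?_ hb.2.1
    rw [Nat.mul_succ] at hj
    simpa [show a + p + p * j = b by omega] using add_mul_mem_of_add_mem h ha.2.2 (by omega) j
  have hfin : J.Finite := Set.Finite.of_finite_image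
    ((Set.finite_Iio p).subset (by rintro _ ⟨n, -, rfl⟩; exact Nat.mod_lt n hp)) hinj
  obtain ⟨B, hB⟩ := hfin.bddAbove
  exact ⟨K + B + 1, fun n hn hnp =>
    by_contra fun hnS => absurd (hB ⟨by omega, hnS, hnp⟩) (by omega)⟩

theorem periodicAbove_of_add_mem (h : ∀ n ∈ S, K < n → n + p ∈ S) (hp : 0 < p) :
    ∃ M, PeriodicAbove S M p := by
  obtain ⟨M, hM⟩ := exists_forall_add_mem_imp_mem h hp
  refine ⟨max M (K + 1), fun a b ha hb hab => ?_⟩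
  wlog hle : a ≤ b generalizing a b
  · exact (this b a hb ha hab.symm (by omega)).symm
  obtain ⟨j, hj⟩ := (Nat.modEq_iff_dvd' hle).1 hab
  rw [show b = a + p * j by omega]
  refine ⟨fun haS => add_mul_mem_of_add_mem h haS (by omega) j, fun hbS => ?_⟩
  clear hj hb
  induction j with
  | zero => simpa using hbS
  | succ j ih =>
    exact ih (hM _ (by omega) (by simpa [Nat.mul_succ, Nat.add_assoc] using hbS))

end AddMem

theorem Finset.exists_periodicAbove {ι : Type*} (C : Finset ι) (S : ι → Set ℕ)
    (h : ∀ i ∈ C, ∃ M p, 0 < p ∧ PeriodicAbove (S i) M p) :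
    ∃ M p, 0 < p ∧ ∀ i ∈ C, PeriodicAbove (S i) M p := by
  classical
  induction C using Finset.induction_on with
  | empty => exact ⟨0, 1, one_pos, by simp⟩
  | insert i C _ ih =>
    obtain ⟨M, p, hp, hC⟩ := ih fun j hj => h j (Finset.mem_insert_of_mem hj)
    obtain ⟨M', p', hp', hi⟩ := h i (Finset.mem_insert_self i C)
    refine ⟨max M M', p * p', Nat.mul_pos hp hp', ?_⟩
    simp only [Finset.mem_insert, forall_eq_or_imp]
    exact ⟨hi.mono (le_max_right _ _) (dvd_mul_left _ _),
      fun j hj => (hC j hj).mono (le_max_left _ _) (dvd_mul_right _ _)⟩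

/-! ### Pumping letter counts of context-free languages -/

namespace ContextFreeGrammar

open Symbol

variable {T : Type*} {g : ContextFreeGrammar T}

inductive DerivesIn (g : ContextFreeGrammar T) :
    List (Symbol T g.NT) → List (Symbol T g.NT) → ℕ → Prop
  | refl (u : List (Symbol T g.NT)) : g.DerivesIn u u 0
  | head {u v w : List (Symbol T g.NT)} {n : ℕ} :
      g.Produces u v → g.DerivesIn v w n → g.DerivesIn u w (n + 1)

theorem DerivesIn.derives {u v : List (Symbol T g.NT)} {n : ℕ} (h : g.DerivesIn u v n) :
    g.Derives u v := by
  induction h with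
  | refl => exact Derives.refl _
  | head hp _ ih => exact hp.trans_derives ih

theorem Derives.exists_derivesIn {u v : List (Symbol T g.NT)} (h : g.Derives u v) :
    ∃ n, g.DerivesIn u v n := by
  induction h using Relation.ReflTransGen.head_induction_on with
  | refl => exact ⟨0, .refl _⟩
  | head hp _ ih => obtain ⟨n, hn⟩ := ih; exact ⟨n + 1, .head hp hn⟩

theorem _root_.ContextFreeRule.Rewrites.append_split {N : Type*} {r : ContextFreeRule T N}
    {u v z : List (Symbol T N)} (h : r.Rewrites (u ++ v) z) :
    (∃ u', r.Rewrites u u' ∧ z = u' ++ v) ∨ (∃ v', r.Rewrites v v' ∧ z = u ++ v') := by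
  induction u generalizing z with
  | nil => exact .inr ⟨z, h, rfl⟩
  | cons s u ih =>
    cases h with
    | head => exact .inl ⟨_, .head u, by simp⟩
    | cons _ h =>
      rcases ih h with ⟨u', h', rfl⟩ | ⟨v', h', rfl⟩
      · exact .inl ⟨s :: u', h'.cons s, rfl⟩
      · exact .inr ⟨v', h', rfl⟩

theorem DerivesIn.append_split {u v w : List (Symbol T g.NT)} {n : ℕ}
    (h : g.DerivesIn (u ++ v) w n) :
    ∃ w₁ w₂ n₁ n₂, w = w₁ ++ w₂ ∧ n₁ + n₂ = n ∧ g.DerivesIn u w₁ n₁ ∧ g.DerivesIn v w₂ n₂ := by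
  induction n generalizing u v with
  | zero => cases h; exact ⟨u, v, 0, 0, rfl, rfl, .refl u, .refl v⟩
  | succ n ih =>
    obtain _ | ⟨⟨r, hr, hrw⟩, h⟩ := h
    rcases hrw.append_split with ⟨u', hu', rfl⟩ | ⟨v', hv', rfl⟩
    · obtain ⟨w₁, w₂, n₁, n₂, rfl, rfl, h₁, h₂⟩ := ih h
      exact ⟨w₁, w₂, n₁ + 1, n₂, rfl, by omega, .head ⟨r, hr, hu'⟩ h₁, h₂⟩
    · obtain ⟨w₁, w₂, n₁, n₂, rfl, rfl, h₁, h₂⟩ := ih h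
      exact ⟨w₁, w₂, n₁, n₂ + 1, rfl, by omega, h₁, .head ⟨r, hr, hv'⟩ h₂⟩

theorem DerivesIn.eq_of_terminal {w : List T} {v : List (Symbol T g.NT)} {n : ℕ}
    (h : g.DerivesIn (w.map terminal) v n) : v = w.map terminal := by
  cases h with
  | refl => rfl
  | head hp _ =>
    obtain ⟨r, -, hr⟩ := hp.exists_nonterminal_input_mem
    simp at hr

theorem DerivesIn.exists_rule {A : g.NT} {w : List T} {n : ℕ}
    (h : g.DerivesIn [nonterminal A] (w.map terminal) n) :
    ∃ r ∈ g.rules, r.input = A ∧ ∃ n', n = n' + 1 ∧ g.DerivesIn r.output (w.map terminal) n' := by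
  generalize hv : w.map terminal = v at h
  obtain _ | ⟨⟨r, hr, hrw⟩, h⟩ := h
  · cases w <;> simp_all
  rcases hrw with _ | ⟨_, ⟨⟩⟩
  exact ⟨r, hr, rfl, _, rfl, by simpa [← hv] using h⟩

/-- `A ⇒* u B v` -/
def DerivesAround (g : ContextFreeGrammar T) (A : g.NT) (u : List T) (B : g.NT) (v : List T) :
    Prop :=
  g.Derives [nonterminal A] (u.map terminal ++ nonterminal B :: v.map terminal)

theorem DerivesAround.refl (A : g.NT) : g.DerivesAround A [] A [] := Derives.refl _

theorem DerivesAround.trans {A B C : g.NT} {u v u' v' : List T} (h : g.DerivesAround A u B v)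
    (h' : g.DerivesAround B u' C v') : g.DerivesAround A (u ++ u') C (v' ++ v) := by
  have := (Derives.append_right h' (v.map terminal)).append_left (u.map terminal)
  simpa [DerivesAround] using Derives.trans h (by simpa using this)

theorem DerivesAround.derives {A B : g.NT} {u v z : List T} (h : g.DerivesAround A u B v)
    (hz : g.Derives [nonterminal B] (z.map terminal)) :
    g.Derives [nonterminal A] ((u ++ z ++ v).map terminal) := by
  have := (hz.append_right (v.map terminal)).append_left (u.map terminal)
  simpa using Derives.trans h (by simpa using this)

/-- `B` labels a node of a parse tree of `w` from `A`. -/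
def DerivesThrough (g : ContextFreeGrammar T) (A : g.NT) (w : List T) (B : g.NT) : Prop :=
  ∃ u z v, w = u ++ z ++ v ∧ g.DerivesAround A u B v ∧ g.Derives [nonterminal B] (z.map terminal)

theorem DerivesThrough.of_derivesAround {A B C : g.NT} {u v w : List T}
    (h : g.DerivesAround A u B v) (hB : g.DerivesThrough B w C) :
    g.DerivesThrough A (u ++ w ++ v) C := by
  obtain ⟨u', z, v', rfl, hctx, hz⟩ := hB
  exact ⟨u ++ u', z, v' ++ v, by simp, h.trans hctx, hz⟩

variable [DecidableEq T] (t : T)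

theorem DerivesIn.exists_heavy_symbol : ∀ {u : List (Symbol T g.NT)} {w : List T} {n : ℕ},
    g.DerivesIn u (w.map terminal) n → 0 < w.count t →
    ∃ s w₁ wm w₂ n', n' ≤ n ∧ w = w₁ ++ wm ++ w₂ ∧ g.DerivesIn [s] (wm.map terminal) n' ∧
      g.Derives u (w₁.map terminal ++ s :: w₂.map terminal) ∧
      w.count t ≤ u.length * wm.count t
  | [], w, n, h, hw => by
    have := (show g.DerivesIn (([] : List T).map terminal) _ n from h).eq_of_terminal
    simp_all
  | s :: u, w, n, h, hw => by
    obtain ⟨v₁, v₂, n₁, n₂, hv, rfl, h₁, h₂⟩ :=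
      (show g.DerivesIn ([s] ++ u) _ _ from h).append_split
    obtain ⟨w₁, w₂, rfl, rfl, rfl⟩ := List.map_eq_append_iff.1 hv
    simp only [List.count_append, List.length_cons] at hw ⊢
    by_cases hs : w₁.count t + w₂.count t ≤ (u.length + 1) * w₁.count t
    · refine ⟨s, [], w₁, w₂, n₁, by omega, by simp, h₁, ?_, hs⟩
      simpa using h₂.derives.append_left [s]
    have hw₂ : 0 < w₂.count t := by
      by_contra h0
      exact hs (by nlinarith)
    obtain ⟨s', u₁, wm, u₂, n', hn', rfl, hm, hctx, hcount⟩ := exists_heavy_symbol h₂ hw₂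
    refine ⟨s', w₁ ++ u₁, wm, u₂, n', by omega, by simp, hm, ?_, ?_⟩
    · have := (h₁.derives.append_right u).trans (hctx.append_left (w₁.map terminal))
      simpa using this
    · simp only [List.count_append] at hs hcount ⊢
      nlinarith

open Classical in
noncomputable def inputs (g : ContextFreeGrammar T) : Finset g.NT :=
  g.rules.image ContextFreeRule.input

def maxOutputLength (g : ContextFreeGrammar T) : ℕ :=
  g.rules.sup fun r => r.output.length

def HasCountLoop (g : ContextFreeGrammar T) (B : g.NT) : Prop :=
  ∃ x y, g.DerivesAround B x B y ∧ 0 < (x ++ y).count t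

theorem DerivesIn.exists_heavy_child {A : g.NT} {w : List T} {n : ℕ}
    (h : g.DerivesIn [nonterminal A] (w.map terminal) n) (hw : g.maxOutputLength < w.count t) :
    A ∈ g.inputs ∧ ∃ B w₁ wm w₂ n', n' < n ∧ w = w₁ ++ wm ++ w₂ ∧
      g.DerivesIn [nonterminal B] (wm.map terminal) n' ∧ g.DerivesAround A w₁ B w₂ ∧
      w.count t ≤ g.maxOutputLength * wm.count t := by
  obtain ⟨r, hr, rfl, n, rfl, hout⟩ := h.exists_rule
  have hlen : r.output.length ≤ g.maxOutputLength :=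
    Finset.le_sup (f := fun r => r.output.length) hr
  obtain ⟨s, w₁, wm, w₂, n', hn', rfl, hm, hctx, hcount⟩ := hout.exists_heavy_symbol t (by omega)
  replace hcount := hcount.trans (Nat.mul_le_mul_right _ hlen)
  refine ⟨by classical exact Finset.mem_image_of_mem _ hr, ?_⟩
  cases s with
  | terminal a =>
    have := (show g.DerivesIn ([a].map terminal) _ n' from hm).eq_of_terminal
    simp only [List.map_cons, List.map_nil, List.map_eq_singleton_iff, terminal.injEq] at this
    obtain ⟨a, rfl, rfl⟩ := this
    have : [a].count t ≤ 1 := List.count_le_length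
    nlinarith
  | nonterminal B =>
    exact ⟨B, w₁, wm, w₂, n', by omega, rfl, hm,
      (Produces.single ⟨r, hr, ContextFreeRule.Rewrites.input_output⟩).trans hctx, hcount⟩

open Classical in
/-- Follow the child carrying the most letters `t`. `V` collects the nonterminals where this
heavy path lost letters `t`, so reaching one of them again closes a loop containing `t`; each
loss divides the count by at most `maxOutputLength`, which bounds the number of losses. -/
theorem DerivesIn.exists_derivesThrough (n : ℕ) :
    ∀ (V : Finset g.NT) (A : g.NT) (w : List T), g.DerivesIn [nonterminal A] (w.map terminal) n →
      g.maxOutputLength ^ ((g.inputs \ V).card + 1) < w.count t →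
      ∃ B, g.DerivesThrough A w B ∧ (B ∈ V ∨ g.HasCountLoop t B) := by
  induction n using Nat.strong_induction_on with | _ n IH =>
  intro V A w h hbig
  set q := g.maxOutputLength
  by_cases hA : A ∈ V
  · exact ⟨A, ⟨[], w, [], by simp, .refl A, h.derives⟩, .inl hA⟩
  have hq : q < w.count t := lt_of_le_of_lt (Nat.le_self_pow (by omega) q) hbig
  obtain ⟨hAin, B, w₁, wm, w₂, n', hn', rfl, hm, hctx, hcount⟩ := h.exists_heavy_child t hq
  by_cases hdrop : wm.count t < (w₁ ++ wm ++ w₂).count t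
  · have hcard : (g.inputs \ insert A V).card + 1 = (g.inputs \ V).card := by
      rw [Finset.sdiff_insert, Finset.card_erase_add_one (Finset.mem_sdiff.2 ⟨hAin, hA⟩)]
    have hbig' : q ^ ((g.inputs \ insert A V).card + 1) < wm.count t := by
      rw [hcard]
      refine Nat.lt_of_mul_lt_mul_left (a := q) (lt_of_lt_of_le ?_ hcount)
      rwa [← pow_succ']
    obtain ⟨C, ⟨x, z, y, rfl, hBC, hz⟩, hC⟩ := IH n' hn' (insert A V) B _ hm hbig'
    by_cases hCA : C = A
    · subst hCA
      refine ⟨C, ⟨[], _, [], by simp, .refl C, h.derives⟩,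
        .inr ⟨w₁ ++ x, y ++ w₂, hctx.trans hBC, ?_⟩⟩
      simp only [List.count_append] at hdrop ⊢
      omega
    · exact ⟨C, .of_derivesAround hctx ⟨x, z, y, rfl, hBC, hz⟩,
        hC.imp_left fun hC => (Finset.mem_insert.1 hC).resolve_left hCA⟩
  · have hle : (w₁ ++ wm ++ w₂).count t ≤ wm.count t := by omega
    obtain ⟨C, hC, hCV⟩ := IH n' hn' V B wm hm (by omega)
    exact ⟨C, .of_derivesAround hctx hC, hCV⟩

theorem HasCountLoop.mem_inputs {B : g.NT} (h : g.HasCountLoop t B) : B ∈ g.inputs := by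
  classical
  obtain ⟨x, y, hxy, hpos⟩ := h
  rcases Derives.eq_or_head hxy with heq | ⟨_, ⟨r, hr, hrw⟩, -⟩
  · have hlen := congrArg List.length heq
    simp only [List.length_append, List.length_map, List.length_cons, List.length_nil] at hlen
    obtain ⟨rfl, rfl⟩ : x = [] ∧ y = [] :=
      ⟨List.eq_nil_of_length_eq_zero (by omega), List.eq_nil_of_length_eq_zero (by omega)⟩
    simp at hpos
  · have := hrw.nonterminal_input_mem
    simp only [List.mem_singleton, nonterminal.injEq] at this
    exact this ▸ Finset.mem_image_of_mem _ hr

theorem DerivesAround.exists_pow {B : g.NT} {x y : List T} (h : g.DerivesAround B x B y)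
    (j : ℕ) : ∃ X Y, g.DerivesAround B X B Y ∧ (X ++ Y).count t = j * (x ++ y).count t := by
  induction j with
  | zero => exact ⟨[], [], .refl B, by simp⟩
  | succ j ih =>
    obtain ⟨X, Y, hXY, hcount⟩ := ih
    refine ⟨X ++ x, y ++ Y, hXY.trans h, ?_⟩
    simp only [List.count_append] at hcount ⊢
    rw [Nat.succ_mul]
    omega

noncomputable def loopGain (g : ContextFreeGrammar T) (B : g.NT) : ℕ :=
  sInf {k | 0 < k ∧ ∃ x y, g.DerivesAround B x B y ∧ (x ++ y).count t = k}

/-- A multiple of every positive `loopGain` (a nonterminal without loop has `loopGain = sInf ∅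
= 0`, hence the `max 1`), so any loop can be iterated to add exactly `pumpPeriod` letters. -/
noncomputable def pumpPeriod (g : ContextFreeGrammar T) : ℕ :=
  ∏ B ∈ g.inputs, max 1 (g.loopGain t B)

theorem pumpPeriod_pos : 0 < g.pumpPeriod t :=
  Finset.prod_pos fun _ _ => lt_max_of_lt_left one_pos

theorem HasCountLoop.exists_count_eq_pumpPeriod {B : g.NT} (h : g.HasCountLoop t B) :
    ∃ X Y, g.DerivesAround B X B Y ∧ (X ++ Y).count t = g.pumpPeriod t := by
  obtain ⟨x, y, hxy, hpos⟩ := h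
  obtain ⟨hk, x, y, hxy, hcount⟩ := Nat.sInf_mem (s := {k | 0 < k ∧ ∃ x y,
    g.DerivesAround B x B y ∧ (x ++ y).count t = k}) ⟨_, hpos, x, y, hxy, rfl⟩
  have hk : 1 ≤ g.loopGain t B := hk
  have hdvd : g.loopGain t B ∣ g.pumpPeriod t :=
    (max_eq_right hk) ▸
      Finset.dvd_prod_of_mem _ (HasCountLoop.mem_inputs t ⟨x, y, hxy, hcount ▸ hk⟩)
  obtain ⟨X, Y, hXY, hXYcount⟩ := hxy.exists_pow t (g.pumpPeriod t / g.loopGain t B)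
  exact ⟨X, Y, hXY, by rw [hXYcount, hcount]; exact Nat.div_mul_cancel hdvd⟩

theorem exists_count_add_pumpPeriod {w : List T} (hw : w ∈ g.language)
    (hbig : g.maxOutputLength ^ (g.inputs.card + 1) < w.count t) :
    ∃ w' ∈ g.language, w'.count t = w.count t + g.pumpPeriod t := by
  classical
  obtain ⟨n, hn⟩ := ((mem_language_iff g w).1 hw).exists_derivesIn
  obtain ⟨B, ⟨u, z, v, rfl, hctx, hz⟩, hB | hB⟩ :=
    hn.exists_derivesThrough t n ∅ g.initial _ (by simpa using hbig)
  · simp at hB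
  obtain ⟨X, Y, hXY, hcount⟩ := hB.exists_count_eq_pumpPeriod t
  refine ⟨u ++ X ++ z ++ (Y ++ v), (mem_language_iff g _).2 ((hctx.trans hXY).derives hz), ?_⟩
  simp only [List.count_append] at hcount ⊢
  omega

end ContextFreeGrammar

theorem Language.IsContextFree.exists_periodicAbove_count {T : Type*} [DecidableEq T]
    {L : Language T} (hL : L.IsContextFree) (t : T) :
    ∃ M p, 0 < p ∧ PeriodicAbove (List.count t '' L) M p := by
  obtain ⟨g, rfl⟩ := hL
  have hpump : ∀ n ∈ List.count t '' g.language, g.maxOutputLength ^ (g.inputs.card + 1) < n →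
      n + g.pumpPeriod t ∈ List.count t '' g.language := by
    rintro _ ⟨w, hw, rfl⟩ hbig
    exact ContextFreeGrammar.exists_count_add_pumpPeriod t hw hbig
  obtain ⟨M, hM⟩ := periodicAbove_of_add_mem hpump (ContextFreeGrammar.pumpPeriod_pos t)
  exact ⟨M, _, ContextFreeGrammar.pumpPeriod_pos t, hM⟩

/-! ### Graded bisimulations for `PDL(C)` -/

section GradedBisim

variable {α P : Type}

theorem LTS.path_nil_iff {T : LTS α P} {s t : T.S} : T.Path s [] t ↔ t = s := by
  constructor
  · rintro ⟨⟩; rfl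
  · rintro rfl; exact .refl _

theorem LTS.path_cons_iff {T : LTS α P} {s t : T.S} {x : α} {w : List α} :
    T.Path s (x :: w) t ↔ ∃ s', T.trans s x s' ∧ T.Path s' w t := by
  constructor
  · rintro ⟨⟩; exact ⟨_, ‹_›, ‹_›⟩
  · rintro ⟨s', h, hw⟩; exact .step h hw

/-- `Z d s t` lets `s` and `t` be matched to depth `d`; a matching path may read another word
of the same language. -/
structure IsGradedBisim (C : Set (Language α)) {T₁ T₂ : LTS α P}
    (Z : ℕ → T₁.S → T₂.S → Prop) : Prop where
  label : ∀ {d s t}, Z d s t → ∀ p, (T₁.label s p ↔ T₂.label t p)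
  forth : ∀ {d s t}, Z (d + 1) s t → ∀ L ∈ C, ∀ w ∈ L, ∀ s', T₁.Path s w s' →
    ∃ w' ∈ L, ∃ t', T₂.Path t w' t' ∧ Z d s' t'
  back : ∀ {d s t}, Z (d + 1) s t → ∀ L ∈ C, ∀ w ∈ L, ∀ t', T₂.Path t w t' →
    ∃ w' ∈ L, ∃ s', T₁.Path s w' s' ∧ Z d s' t'

theorem sat_box_iff_not_sat_dia_neg {T : LTS α P} {s : T.S} {L : Language α}
    {φ : PDLFormula α P} : Sat T s (.box L φ) ↔ ¬ Sat T s (.dia L (.neg φ)) := by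
  simp only [Sat, not_exists, not_and, not_not]

namespace IsGradedBisim

variable {C : Set (Language α)} {T₁ T₂ : LTS α P} {Z : ℕ → T₁.S → T₂.S → Prop}

theorem sat_dia_iff (hZ : IsGradedBisim C Z) {L : Language α} (hL : L ∈ C)
    {φ : PDLFormula α P} {d : ℕ} (hφ : ∀ s t, Z d s t → (Sat T₁ s φ ↔ Sat T₂ t φ))
    {s : T₁.S} {t : T₂.S} (hst : Z (d + 1) s t) :
    Sat T₁ s (.dia L φ) ↔ Sat T₂ t (.dia L φ) := by
  constructor
  · rintro ⟨w, s', hw, hs', hφs'⟩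
    obtain ⟨w', hw', t', ht', hZ'⟩ := hZ.forth hst L hL w hw s' hs'
    exact ⟨w', t', hw', ht', (hφ s' t' hZ').1 hφs'⟩
  · rintro ⟨w, t', hw, ht', hφt'⟩
    obtain ⟨w', hw', s', hs', hZ'⟩ := hZ.back hst L hL w hw t' ht'
    exact ⟨w', s', hw', hs', (hφ s' t' hZ').2 hφt'⟩

theorem sat_iff (hZ : IsGradedBisim C Z) {φ : PDLFormula α P} (hφ : UsesLangs C φ) :
    ∀ {d s t}, md φ ≤ d → Z d s t → (Sat T₁ s φ ↔ Sat T₂ t φ) := by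
  induction φ with
  | atom p => exact fun _ hst => hZ.label hst p
  | neg φ ih =>
    intro d s t hd hst
    exact not_congr (ih hφ (by simp only [md] at hd; omega) hst)
  | or φ ψ ihφ ihψ =>
    intro d s t hd hst
    simp only [md, max_le_iff] at hd
    exact or_congr (ihφ hφ.1 hd.1 hst) (ihψ hφ.2 hd.2 hst)
  | and φ ψ ihφ ihψ =>
    intro d s t hd hst
    simp only [md, max_le_iff] at hd
    exact and_congr (ihφ hφ.1 hd.1 hst) (ihψ hφ.2 hd.2 hst)
  | dia L φ ih =>
    intro d s t hd hst
    obtain ⟨d, rfl⟩ : ∃ d', d = d' + 1 := ⟨d - 1, by simp only [md] at hd; omega⟩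
    exact hZ.sat_dia_iff hφ.1 (fun _ _ => ih hφ.2 (by simpa [md] using hd)) hst
  | box L φ ih =>
    intro d s t hd hst
    obtain ⟨d, rfl⟩ : ∃ d', d = d' + 1 := ⟨d - 1, by simp only [md] at hd; omega⟩
    rw [sat_box_iff_not_sat_dia_neg, sat_box_iff_not_sat_dia_neg]
    exact not_congr <| hZ.sat_dia_iff (φ := .neg φ) hφ.1
      (fun _ _ h => not_congr (ih hφ.2 (by simpa [md] using hd) h)) hst

end IsGradedBisim

end GradedBisim

/-! ### Combs -/

def Fin.truncSub {H : ℕ} (u : Fin (H + 1)) (m : ℕ) : Fin (H + 1) :=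
  ⟨u - m, lt_of_le_of_lt (Nat.sub_le _ _) u.isLt⟩

@[simp] theorem Fin.val_truncSub {H : ℕ} (u : Fin (H + 1)) (m : ℕ) :
    (u.truncSub m : ℕ) = u - m :=
  rfl

theorem Fin.truncSub_truncSub {H : ℕ} (u : Fin (H + 1)) (m n : ℕ) :
    (u.truncSub m).truncSub n = u.truncSub (m + n) := by
  ext; simp [Nat.sub_sub]

/-- A root with `b`-edges into a chain of levels `0, …, H`, entering at the levels in `starts`.
A `b`-step goes from level `v` to `v - 1`, so level `1` is the only `p`-state and level `0` a
sink; every state carries an `a`-loop. -/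
abbrev comb (H : ℕ) (starts : Set ℕ) : LTS AB Unit where
  S := Option (Fin (H + 1))
  trans
    | s, .a, t => t = s
    | none, .b, t => ∃ v : Fin (H + 1), (v : ℕ) ∈ starts ∧ t = some v
    | some u, .b, t => t = some (u.truncSub 1)
  label s _ := s.elim False fun v => (v : ℕ) = 1

section Comb

variable {H : ℕ} {starts : Set ℕ}

instance : Finite (comb H starts).S := inferInstanceAs (Finite (Option (Fin (H + 1))))

theorem comb_path_some_iff {u : Fin (H + 1)} {w : List AB} {t : (comb H starts).S} :
    (comb H starts).Path (some u) w t ↔ t = some (u.truncSub (w.count .b)) := by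
  induction w generalizing u with
  | nil => exact LTS.path_nil_iff.trans (by rw [List.count_nil]; exact Iff.rfl)
  | cons x w ih =>
    rw [LTS.path_cons_iff]
    cases x <;> simp [ih, Fin.truncSub_truncSub, Nat.add_comm]

theorem comb_path_none_iff {w : List AB} {t : (comb H starts).S} :
    (comb H starts).Path none w t ↔ (w.count .b = 0 ∧ t = none) ∨
      (0 < w.count .b ∧
        ∃ v : Fin (H + 1), (v : ℕ) ∈ starts ∧ t = some (v.truncSub (w.count .b - 1))) := by
  induction w with
  | nil => simpa using LTS.path_nil_iff
  | cons x w ih =>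
    rw [LTS.path_cons_iff]
    cases x with
    | a => simpa using ih
    | b => simp [comb_path_some_iff]

theorem comb_path_mono {starts' : Set ℕ} (h : starts ⊆ starts') {s t : (comb H starts).S}
    {w : List AB} (hw : (comb H starts).Path s w t) : (comb H starts').Path s w t := by
  rcases s with _ | u
  · rw [comb_path_none_iff] at hw ⊢
    exact hw.imp_right fun ⟨hpos, v, hv, ht⟩ => ⟨hpos, v, h hv, ht⟩
  · exact comb_path_some_iff.2 (comb_path_some_iff (starts := starts).1 hw)

theorem diaBoxProp_comb_iff :
    DiaBoxProp (comb H starts) none ↔ ∃ n, 1 ≤ n ∧ ∀ v ∈ starts, v ≤ H → v = n := by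
  have hroot {n : ℕ} {s : (comb H starts).S} :
      (comb H starts).Path none (List.replicate n .a) s ↔ s = none := by
    simp [comb_path_none_iff, List.count_replicate]
  refine exists_congr fun n => and_congr_right fun hn => ?_
  simp only [hroot, exists_eq_left, comb_path_none_iff, List.count_replicate_self]
  constructor
  · intro h v hv hvH
    have := h _ (.inr ⟨hn, ⟨v, by omega⟩, hv, rfl⟩)
    simp only [Option.elim_some, Fin.val_truncSub] at this
    omega
  · rintro h t (⟨h0, -⟩ | ⟨-, v, hv, rfl⟩)
    · omega
    · have := h v hv (by omega)
      simp only [Option.elim_some, Fin.val_truncSub]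
      omega

end Comb

def levelThreshold (M p d : ℕ) : ℕ := d * (M + p) + 2

theorem levelThreshold_succ (M p d : ℕ) :
    levelThreshold M p (d + 1) = levelThreshold M p d + (M + p) := by
  unfold levelThreshold; ring

theorem levelThreshold_mono (M p : ℕ) {d D : ℕ} (h : d ≤ D) :
    levelThreshold M p d ≤ levelThreshold M p D :=
  Nat.add_le_add_right (Nat.mul_le_mul_right _ h) 2

/-- Levels of a comb that no `PDL(C)` formula of depth `d` separates, when `M` and `p` are a
common threshold and period of the sets `List.count .b '' L`, `L ∈ C`. -/
def LevelRel (M p d u v : ℕ) : Prop :=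
  u = v ∨ (u ≡ v [MOD p] ∧ levelThreshold M p d ≤ u ∧ levelThreshold M p d ≤ v)

namespace LevelRel

variable {M p d u v : ℕ}

theorem symm (h : LevelRel M p d u v) : LevelRel M p d v u :=
  h.imp Eq.symm fun ⟨huv, hu, hv⟩ => ⟨huv.symm, hv, hu⟩

theorem eq_one_iff (h : LevelRel M p d u v) : u = 1 ↔ v = 1 := by
  rcases h with rfl | ⟨-, hu, hv⟩
  · rfl
  · unfold levelThreshold at hu hv; omega

theorem forth {N : Set ℕ} (hp : 0 < p) (hN : PeriodicAbove N M p)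
    (h : LevelRel M p (d + 1) u v) {m : ℕ} (hm : m ∈ N) :
    ∃ m' ∈ N, LevelRel M p d (u - m) (v - m') := by
  rcases h with rfl | ⟨huv, hu, hv⟩
  · exact ⟨m, hm, .inl rfl⟩
  have hd := levelThreshold_succ M p d
  by_cases hsmall : m < M + p
  · exact ⟨m, hm, .inr ⟨huv.sub (by omega) (by omega) .rfl, by omega, by omega⟩⟩
  by_cases hfar : levelThreshold M p d + m ≤ u
  · -- land far down in `v`'s residue class, using a short word
    set m' := M + (m - M) % p
    have hm' : m' ≡ m [MOD p] := by
      simpa [m', Nat.add_sub_cancel' (show M ≤ m by omega)] using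
        (Nat.mod_modEq (m - M) p).add_left M
    have hlt : (m - M) % p < p := Nat.mod_lt _ hp
    refine ⟨m', (hN m m' (by omega) (by omega) hm'.symm).1 hm,
      .inr ⟨huv.sub (by omega) (by omega) hm'.symm, by omega, by omega⟩⟩
  · -- land exactly where `u` lands
    refine ⟨m + v - u, (hN m (m + v - u) (by omega) (by omega) ?_).1 hm, .inl (by omega)⟩
    exact .add_right_cancel huv.symm (by rw [Nat.sub_add_cancel (by omega)])

end LevelRel

section CombRel

variable {H : ℕ} {M p D : ℕ} {C : Set (Language AB)}

def combRel (M p D d : ℕ) : Option (Fin (H + 1)) → Option (Fin (H + 1)) → Prop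
  | none, none => d ≤ D
  | some u, some v => LevelRel M p d u v
  | _, _ => False

theorem combRel_refl {d : ℕ} (hd : d ≤ D) : ∀ s : Option (Fin (H + 1)), combRel M p D d s s
  | none => hd
  | some _ => .inl rfl

theorem combRel_symm {d : ℕ} :
    ∀ {s t : Option (Fin (H + 1))}, combRel M p D d s t → combRel M p D d t s
  | none, none, h => h
  | some _, some _, h => LevelRel.symm h

theorem LevelRel.exists_comb_path (hp : 0 < p)
    (hC : ∀ L ∈ C, PeriodicAbove (List.count AB.b '' L) M p) {starts starts' : Set ℕ} {d : ℕ}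
    {u v : Fin (H + 1)} (h : LevelRel M p (d + 1) u v) {L : Language AB} (hL : L ∈ C)
    {w : List AB} (hw : w ∈ L) {s : (comb H starts).S} (hs : (comb H starts).Path (some u) w s) :
    ∃ w' ∈ L, ∃ t, (comb H starts').Path (some v) w' t ∧ combRel M p D d s t := by
  obtain ⟨m', ⟨w', hw', rfl⟩, hrel⟩ := h.forth hp (hC L hL) ⟨w, hw, rfl⟩
  exact ⟨w', hw', _, comb_path_some_iff.2 rfl, by rw [comb_path_some_iff.1 hs]; exact hrel⟩

abbrev combSpot (M p D : ℕ) : ℕ := levelThreshold M p (D + 1)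

/-- The witness `T₁`: its `p`-state lies exactly `combSpot M p D` letters `b` below the root;
that of `combDouble M p D` also `combSpot M p D + p` letters below. -/
abbrev combSingle (M p D : ℕ) : LTS AB Unit :=
  comb (combSpot M p D + p) {combSpot M p D}

abbrev combDouble (M p D : ℕ) : LTS AB Unit :=
  comb (combSpot M p D + p) {combSpot M p D, combSpot M p D + p}

theorem exists_combSingle_path_of_combDouble_path (hp : 0 < p)
    (hC : ∀ L ∈ C, PeriodicAbove (List.count AB.b '' L) M p)
    {d : ℕ} (hd : d + 1 ≤ D) {L : Language AB} (hL : L ∈ C) {w : List AB} (hw : w ∈ L)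
    {t : (combDouble M p D).S} (ht : (combDouble M p D).Path none w t) :
    ∃ w' ∈ L, ∃ s, (combSingle M p D).Path none w' s ∧ combRel M p D d s t := by
  set n₀ := combSpot M p D
  have hn₀ : levelThreshold M p d + (M + p) ≤ n₀ := by
    rw [← levelThreshold_succ]; exact levelThreshold_mono M p (by omega)
  let v₀ : Fin (n₀ + p + 1) := ⟨n₀, by omega⟩
  rcases comb_path_none_iff.1 ht with ⟨h0, rfl⟩ | ⟨hpos, v, hv | hv, rfl⟩
  · exact ⟨w, hw, none, comb_path_none_iff.2 (.inl ⟨h0, rfl⟩), Nat.le_of_succ_le hd⟩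
  · exact ⟨w, hw, _, comb_path_none_iff.2 (.inr ⟨hpos, v, hv, rfl⟩), .inl rfl⟩
  set m := w.count .b
  rw [Set.mem_singleton_iff] at hv
  by_cases hm : M + p < m
  · -- drop `p` letters `b` and land at the same level
    obtain ⟨w', hw', hcount⟩ := (hC L hL m (m - p) (by omega) (by omega)
      ((Nat.modEq_sub_modulus_iff (by omega)).2 rfl)).1 ⟨w, hw, rfl⟩
    refine ⟨w', hw', _, comb_path_none_iff.2 (.inr ⟨by omega, v₀, rfl, rfl⟩), .inl ?_⟩
    simp only [Fin.val_truncSub, hcount, hv, v₀]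
    omega
  · -- the same word lands at a level congruent to `t` and far above the `p`-state
    refine ⟨w, hw, _, comb_path_none_iff.2 (.inr ⟨hpos, v₀, rfl, rfl⟩), .inr ⟨?_, ?_, ?_⟩⟩
    · simp only [Fin.val_truncSub, hv, v₀]
      rw [show n₀ + p - (m - 1) = n₀ - (m - 1) + p by omega]
      exact (Nat.add_mod_right _ _).symm
    · simp only [Fin.val_truncSub, v₀]; omega
    · simp only [Fin.val_truncSub, hv]; omega

theorem isGradedBisim_combRel (hp : 0 < p)
    (hC : ∀ L ∈ C, PeriodicAbove (List.count AB.b '' L) M p) :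
    IsGradedBisim C (T₁ := combSingle M p D) (T₂ := combDouble M p D) (combRel M p D) where
  label := by
    rintro d (_ | u) (_ | v) h ⟨⟩ <;> simp only [combRel] at h
    · exact Iff.rfl
    · exact h.eq_one_iff
  forth := by
    rintro d (_ | u) (_ | v) h L hL w hw s hs <;> simp only [combRel] at h
    · exact ⟨w, hw, s, comb_path_mono (by simp) hs, combRel_refl (by omega) s⟩
    · exact h.exists_comb_path hp hC hL hw hs
  back := by
    rintro d (_ | u) (_ | v) h L hL w hw t ht <;> simp only [combRel] at h
    · exact exists_combSingle_path_of_combDouble_path hp hC h hL hw ht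
    · obtain ⟨w', hw', s, hs, hrel⟩ := h.symm.exists_comb_path hp hC hL hw ht
      exact ⟨w', hw', s, hs, combRel_symm hrel⟩

end CombRel

/-- The property `⟨aⁿ⟩[bⁿ]p` cannot be expressed in `PDL(CFL)`: for every finite
collection `C` of context-free languages over `{a,b}` and every `PDL(C)` formula
`φ`, there are two finite pointed LTSs, one satisfying the property and one not,
that `φ` does not distinguish. -/
theorem diaBox_not_pdl_cfl (C : Finset (Language AB))
    (hcf : ∀ L ∈ C, Language.IsContextFree L)
    (φ : PDLFormula AB Unit) (hφ : UsesLangs (↑C : Set (Language AB)) φ) :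
    ∃ (T₁ T₂ : LTS AB Unit) (s₁ : T₁.S) (s₂ : T₂.S),
      Finite T₁.S ∧ Finite T₂.S ∧
      DiaBoxProp T₁ s₁ ∧ ¬ DiaBoxProp T₂ s₂ ∧
      (Sat T₁ s₁ φ ↔ Sat T₂ s₂ φ) := by
  obtain ⟨M, p, hp, hC⟩ :=
    C.exists_periodicAbove _ fun L hL => (hcf L hL).exists_periodicAbove_count AB.b
  have hspot : 2 ≤ combSpot M p (md φ) := Nat.le_add_left _ _
  refine ⟨combSingle M p (md φ), combDouble M p (md φ), none, none, inferInstance, inferInstance,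
    diaBoxProp_comb_iff.2 ⟨_, by omega, fun v hv _ => hv⟩, fun h => ?_,
    (isGradedBisim_combRel hp hC).sat_iff hφ le_rfl le_rfl⟩
  obtain ⟨n, -, hn⟩ := diaBoxProp_comb_iff.1 h
  have h₁ := hn _ (Set.mem_insert _ _) (by omega)
  have h₂ := hn _ (Set.mem_insert_of_mem _ rfl) le_rfl
  omega
end
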